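/- Let q be a positive real with q ≠ 1, let l be a positive half-odd-integer (l ∈ ℤ + 1/2, l ≥ 1/2), and fix ε₂, ε₃ ∈ {±1}. Define matrices A, B indexed by m ∈ {1/2, 3/2, ..., l}: B is diagonal with B_{mm} = ε₂·[m]₊ where [a]₊ = (q^a + q^{-a})/(q - q^{-1}); A has entries A_{1/2,1/2} = ε₃·[l + 1/2]/(q^{1/2} - q^{-1/2}), A_{m+1,m} = ([l+m+1][l-m])^{1/2}/(q^m - q^{-m}) for 1/2 ≤ m < l, A_{m-1,m} = -([l+m][l-m+1])^{1/2}/(q^m - q^{-m}) for 1/2 < m ≤ l, and all other entries zero, where [a] = (q^a - q^{-a})/(q - q^{-1}). Then A B² - (q+q^{-1}) B A B + B² A = -A and A² B - (q+q^{-1}) A B A + B A² = -B. -/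

import Mathlib

/-- The q-number `[a] = (q^a - q^{-a})/(q - q⁻¹)` for real `q` and integer `a`. -/
noncomputable def qnumZ (q : ℝ) (a : ℤ) : ℝ := (q ^ a - q ^ (-a)) / (q - q⁻¹)

/-- The 'plus' q-number `[a]₊ = (q^a + q^{-a})/(q - q⁻¹)` for real `a`. -/
noncomputable def qnumPlus (q : ℝ) (a : ℝ) : ℝ := (q ^ a + q ^ (-a)) / (q - q⁻¹)

/-!
`B` is diagonal and `A` is tridiagonal apart from its corner entry `A₀₀`, so both relations can
be checked entrywise. With `dₘ = ε₂ [m]₊` the first relation says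
`dᵢ² - (q + q⁻¹) dᵢ dⱼ + dⱼ² = -1` wherever `Aᵢⱼ ≠ 0`; off the diagonal the second one is the
recurrence `dₘ₋₁ + dₘ₊₁ = (q + q⁻¹) dₘ`, and on the diagonal it is a rational identity in
`q^(1/2)`, `q^m` and `q^l`. Since `[-m]₊ = [m]₊`, the conditions at the corner are the bulk ones
at the mirrored index `m = -1/2`, with `A_{1/2,1/2}²` in place of the missing product
`A_{1/2,-1/2} A_{-1/2,1/2}`. At the other end,
`[l - m] = 0` for `m = l`, so the truncation to `m ≤ l` costs nothing.
-/

section QSerre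
open Finset Matrix

variable {n R : Type*} [Fintype n] [DecidableEq n] [CommRing R]

def qSerre (Q : R) (X Y : Matrix n n R) : Matrix n n R :=
  X * Y ^ 2 - Q • (Y * X * Y) + Y ^ 2 * X

theorem qSerre_diagonal_right_apply (Q : R) (A : Matrix n n R) (d : n → R) (i j : n) :
    qSerre Q A (diagonal d) i j = A i j * (d i ^ 2 - Q * d i * d j + d j ^ 2) := by
  simp only [qSerre, sq, Matrix.sub_apply, Matrix.add_apply, Matrix.smul_apply, smul_eq_mul,
    mul_diagonal, diagonal_mul, diagonal_mul_diagonal]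
  ring

theorem qSerre_diagonal_left_apply (Q : R) (A : Matrix n n R) (d : n → R) (i j : n) :
    qSerre Q (diagonal d) A i j = ∑ m, A i m * A m j * (d i - Q * d m + d j) := by
  have hAA : (A ^ 2) i j = ∑ m, A i m * A m j := by rw [sq, mul_apply]
  have hADA : (A * diagonal d * A) i j = ∑ m, A i m * d m * A m j := by
    rw [mul_apply]
    simp only [mul_diagonal]
  rw [qSerre, Matrix.add_apply, Matrix.sub_apply, Matrix.smul_apply, diagonal_mul, mul_diagonal,
    hAA, hADA, smul_eq_mul, mul_sum, mul_sum, sum_mul, ← sum_sub_distrib, ← sum_add_distrib]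
  exact sum_congr rfl fun m _ => by ring

end QSerre

section TridiagCorner
open Finset Matrix

variable {R : Type*} [CommRing R] (c : R) (lo up : ℕ → R)

def tridiagCorner (i j : ℕ) : R :=
  if i = 0 ∧ j = 0 then c else if i = j + 1 then lo j else if j = i + 1 then up j else 0

variable {c lo up}

theorem tridiagCorner_support {i j : ℕ} (h : tridiagCorner c lo up i j ≠ 0) :
    i = 0 ∧ j = 0 ∨ i = j + 1 ∨ j = i + 1 := by
  unfold tridiagCorner at h
  split_ifs at h <;> tauto

@[simp] theorem tridiagCorner_zero_zero : tridiagCorner c lo up 0 0 = c := if_pos ⟨rfl, rfl⟩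

@[simp] theorem tridiagCorner_succ_self (n : ℕ) : tridiagCorner c lo up (n + 1) n = lo n := by
  simp [tridiagCorner]

@[simp] theorem tridiagCorner_self_succ (n : ℕ) : tridiagCorner c lo up n (n + 1) = up (n + 1) := by
  rw [tridiagCorner, if_neg (by omega), if_neg (by omega), if_pos rfl]

theorem sum_range_tridiagCorner_zero_mul (G : ℕ → R) {k : ℕ} (hk : 0 < k) :
    ∑ m ∈ range k, tridiagCorner c lo up 0 m * G m = c * G 0 + if 1 < k then up 1 * G 1 else 0 := by
  have hrow (m : ℕ) : tridiagCorner c lo up 0 m * G m =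
      (if m = 0 then c * G 0 else 0) + if m = 1 then up 1 * G 1 else 0 := by
    rcases m with _ | _ | m <;> simp [tridiagCorner]
  simp only [hrow, sum_add_distrib, sum_ite_eq', mem_range, if_pos hk]

theorem sum_range_tridiagCorner_succ_mul (G : ℕ → R) {k n : ℕ} (hn : n + 1 < k) :
    ∑ m ∈ range k, tridiagCorner c lo up (n + 1) m * G m =
      lo n * G n + if n + 2 < k then up (n + 2) * G (n + 2) else 0 := by
  have hrow (m : ℕ) : tridiagCorner c lo up (n + 1) m * G m =
      (if m = n then lo n * G n else 0) + if m = n + 2 then up (n + 2) * G (n + 2) else 0 := by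
    by_cases h1 : m = n
    · simp [h1]
    by_cases h2 : m = n + 2
    · simp [h2]
    rw [tridiagCorner, if_neg (by omega), if_neg (by omega), if_neg (by omega), if_neg h1, if_neg h2]
    simp
  simp only [hrow, sum_add_distrib, sum_ite_eq', mem_range, if_pos (show n < k by omega)]

variable (Q : R) (d : ℕ → R)

theorem tridiagCorner_mul_sq_sub_mul_add_sq (hc1 : (2 - Q) * d 0 ^ 2 = -1)
    (hd1 : ∀ n, d n ^ 2 - Q * d n * d (n + 1) + d (n + 1) ^ 2 = -1) (i j : ℕ) :
    tridiagCorner c lo up i j * (d i ^ 2 - Q * d i * d j + d j ^ 2) = -tridiagCorner c lo up i j := by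
  unfold tridiagCorner
  split_ifs with h0 h1 h2
  · obtain ⟨rfl, rfl⟩ := h0
    linear_combination c * hc1
  · subst h1
    linear_combination lo j * hd1 j
  · subst h2
    linear_combination up (i + 1) * hd1 i
  · ring

theorem tridiagCorner_mul_tridiagCorner_mul_eq_zero (hc2 : d 0 + d 1 = Q * d 0)
    (hd2 : ∀ n, d n + d (n + 2) = Q * d (n + 1)) {i j : ℕ} (hij : i ≠ j) (m : ℕ) :
    tridiagCorner c lo up i m * tridiagCorner c lo up m j * (d i - Q * d m + d j) = 0 := by
  by_cases him : tridiagCorner c lo up i m = 0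
  · simp [him]
  by_cases hmj : tridiagCorner c lo up m j = 0
  · simp [hmj]
  suffices d i - Q * d m + d j = 0 by simp [this]
  rcases tridiagCorner_support him with ⟨rfl, rfl⟩ | rfl | rfl <;>
    rcases tridiagCorner_support hmj with ⟨h, rfl⟩ | h | h
  all_goals try omega
  · subst h; linear_combination hc2
  · subst h; linear_combination hc2
  · subst h; linear_combination hd2 j
  · subst h; linear_combination hd2 i

theorem sum_range_tridiagCorner_mul_tridiagCorner_self {k : ℕ}
    (hc3 : c ^ 2 * (2 * d 0 - Q * d 0) + lo 0 * up 1 * (2 * d 0 - Q * d 1) = -d 0)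
    (hd3 : ∀ n, n + 2 ≤ k → lo n * up (n + 1) * (2 * d (n + 1) - Q * d n) +
      lo (n + 1) * up (n + 2) * (2 * d (n + 1) - Q * d (n + 2)) = -d (n + 1))
    (hend : lo (k - 1) * up k = 0) {i : ℕ} (hi : i < k) :
    ∑ m ∈ range k, tridiagCorner c lo up i m * tridiagCorner c lo up m i * (d i - Q * d m + d i) =
      -d i := by
  simp only [mul_assoc]
  rcases i with _ | n
  · rw [sum_range_tridiagCorner_zero_mul _ hi]
    simp only [tridiagCorner_zero_zero, tridiagCorner_succ_self]
    split_ifs with hk1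
    · linear_combination hc3
    · obtain rfl : k = 1 := by omega
      linear_combination hc3 - (2 * d 0 - Q * d 1) * hend
  · rw [sum_range_tridiagCorner_succ_mul _ hi]
    simp only [tridiagCorner_self_succ, tridiagCorner_succ_self]
    split_ifs with hk2
    · linear_combination hd3 n (by omega)
    · obtain rfl : k = n + 2 := by omega
      rw [show n + 2 - 1 = n + 1 by omega] at hend
      linear_combination hd3 n le_rfl - (2 * d (n + 1) - Q * d (n + 2)) * hend

variable {k : ℕ}

theorem qSerre_tridiagCorner_diagonal (hc1 : (2 - Q) * d 0 ^ 2 = -1)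
    (hd1 : ∀ n, d n ^ 2 - Q * d n * d (n + 1) + d (n + 1) ^ 2 = -1) :
    qSerre Q (of fun i j : Fin k => tridiagCorner c lo up i j) (diagonal fun i : Fin k => d i) =
      -of fun i j : Fin k => tridiagCorner c lo up i j := by
  ext i j
  rw [qSerre_diagonal_right_apply, Matrix.neg_apply, of_apply]
  exact tridiagCorner_mul_sq_sub_mul_add_sq Q d hc1 hd1 i j

theorem qSerre_diagonal_tridiagCorner (hc2 : d 0 + d 1 = Q * d 0)
    (hd2 : ∀ n, d n + d (n + 2) = Q * d (n + 1))
    (hc3 : c ^ 2 * (2 * d 0 - Q * d 0) + lo 0 * up 1 * (2 * d 0 - Q * d 1) = -d 0)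
    (hd3 : ∀ n, n + 2 ≤ k → lo n * up (n + 1) * (2 * d (n + 1) - Q * d n) +
      lo (n + 1) * up (n + 2) * (2 * d (n + 1) - Q * d (n + 2)) = -d (n + 1))
    (hend : lo (k - 1) * up k = 0) :
    qSerre Q (diagonal fun i : Fin k => d i) (of fun i j : Fin k => tridiagCorner c lo up i j) =
      -diagonal fun i : Fin k => d i := by
  ext i j
  rw [qSerre_diagonal_left_apply, Matrix.neg_apply]
  simp only [of_apply]
  by_cases hij : i = j
  · subst hij
    rw [diagonal_apply_eq, Fin.sum_univ_eq_sum_range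
      (fun m => tridiagCorner c lo up i m * tridiagCorner c lo up m i * (d i - Q * d m + d i))]
    exact sum_range_tridiagCorner_mul_tridiagCorner_self Q d hc3 hd3 hend i.isLt
  · rw [diagonal_apply_ne _ hij, neg_zero]
    exact sum_eq_zero fun m _ =>
      tridiagCorner_mul_tridiagCorner_mul_eq_zero Q d hc2 hd2 (Fin.val_ne_of_ne hij) m

end TridiagCorner

section QBracket
variable {F : Type*} [Field F]

def qBracket (q X : F) : F := (X - X⁻¹) / (q - q⁻¹)

def qBracketPlus (q X : F) : F := (X + X⁻¹) / (q - q⁻¹)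

theorem qBracketPlus_inv (q X : F) : qBracketPlus q X⁻¹ = qBracketPlus q X := by
  rw [qBracketPlus, qBracketPlus, inv_inv, add_comm]

variable {q : F}

theorem qBracketPlus_sq_sub_mul_add_sq (hq : q ≠ 0) (hq2 : q ^ 2 ≠ 1) {t : F} (ht : t ≠ 0) :
    qBracketPlus q t ^ 2 - (q + q⁻¹) * qBracketPlus q t * qBracketPlus q (t * q) +
      qBracketPlus q (t * q) ^ 2 = -1 := by
  have : q ^ 2 - 1 ≠ 0 := sub_ne_zero.2 hq2
  unfold qBracketPlus
  field_simp
  ring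

theorem qBracketPlus_add_qBracketPlus (hq : q ≠ 0) {t : F} (ht : t ≠ 0) :
    qBracketPlus q t + qBracketPlus q (t * q * q) = (q + q⁻¹) * qBracketPlus q (t * q) := by
  unfold qBracketPlus
  field_simp
  ring

variable {r : F} (hr : r * r = q) (hr0 : r ≠ 0)
include hr hr0

-- The diagonal entry of the second relation at the index `m` with `P * q * r = q ^ m`,
-- for `K = q ^ (l + 1/2)`.
theorem qBracket_identity_bulk (hq2 : q ^ 2 ≠ 1) {P K : F} (hP : P ≠ 0) (hK : K ≠ 0)
    (h0 : (P * r) ^ 2 ≠ 1) (h1 : (P * q * r) ^ 2 ≠ 1) (h2 : (P * q * q * r) ^ 2 ≠ 1) :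
    -(qBracket q (K * (P * q)) * qBracket q (K / (P * q))) /
          ((P * r - (P * r)⁻¹) * (P * q * r - (P * q * r)⁻¹)) *
        (2 * qBracketPlus q (P * q * r) - (q + q⁻¹) * qBracketPlus q (P * r)) +
      -(qBracket q (K * (P * q * q)) * qBracket q (K / (P * q * q))) /
          ((P * q * r - (P * q * r)⁻¹) * (P * q * q * r - (P * q * q * r)⁻¹)) *
        (2 * qBracketPlus q (P * q * r) - (q + q⁻¹) * qBracketPlus q (P * q * q * r)) =
      -qBracketPlus q (P * q * r) := by
  subst hr
  have : r ^ 4 - 1 ≠ 0 := by intro h; apply hq2; linear_combination h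
  have : P ^ 2 * r ^ 2 - 1 ≠ 0 := by intro h; apply h0; linear_combination h
  have : P ^ 2 * r ^ 6 - 1 ≠ 0 := by intro h; apply h1; linear_combination h
  have : P ^ 2 * r ^ 10 - 1 ≠ 0 := by intro h; apply h2; linear_combination h
  unfold qBracketPlus qBracket
  field_simp
  ring

-- Via `qBracketPlus_inv`, the corner identities are the bulk ones at `t = r⁻¹` or `P = q⁻¹`.

theorem inv_mul_eq_of_mul_self_eq : r⁻¹ * q = r := by rw [← hr, inv_mul_cancel_left₀ hr0]

theorem inv_mul_eq_inv_of_mul_self_eq : q⁻¹ * r = r⁻¹ := by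
  rw [← hr, mul_inv, inv_mul_cancel_right₀ hr0]

theorem two_sub_mul_qBracketPlus_sq (hq2 : q ^ 2 ≠ 1) :
    (2 - (q + q⁻¹)) * qBracketPlus q r ^ 2 = -1 := by
  have hq : q ≠ 0 := hr ▸ mul_ne_zero hr0 hr0
  have h := qBracketPlus_sq_sub_mul_add_sq hq hq2 (inv_ne_zero hr0)
  rw [qBracketPlus_inv, inv_mul_eq_of_mul_self_eq hr hr0] at h
  linear_combination h

theorem qBracketPlus_add_qBracketPlus_mul :
    qBracketPlus q r + qBracketPlus q (q * r) = (q + q⁻¹) * qBracketPlus q r := by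
  have h := qBracketPlus_add_qBracketPlus (hr ▸ mul_ne_zero hr0 hr0) (inv_ne_zero hr0)
  rwa [qBracketPlus_inv, inv_mul_eq_of_mul_self_eq hr hr0, mul_comm r q] at h

theorem qBracket_identity_corner (hq2 : q ^ 2 ≠ 1) {K : F} (hK : K ≠ 0)
    (h0 : r ^ 2 ≠ 1) (h1 : (q * r) ^ 2 ≠ 1) :
    (qBracket q K / (r - r⁻¹)) ^ 2 * (2 * qBracketPlus q r - (q + q⁻¹) * qBracketPlus q r) +
      -(qBracket q (K * q) * qBracket q (K / q)) / ((r - r⁻¹) * (q * r - (q * r)⁻¹)) *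
        (2 * qBracketPlus q r - (q + q⁻¹) * qBracketPlus q (q * r)) =
      -qBracketPlus q r := by
  have hq : q ≠ 0 := hr ▸ mul_ne_zero hr0 hr0
  have h := qBracket_identity_bulk hr hr0 hq2 (inv_ne_zero hq) hK
    (by rwa [inv_mul_eq_inv_of_mul_self_eq hr hr0, inv_pow, inv_ne_one])
    (by rwa [inv_mul_cancel₀ hq, one_mul]) (by rwa [inv_mul_cancel₀ hq, one_mul])
  rw [inv_mul_cancel₀ hq, inv_mul_eq_inv_of_mul_self_eq hr hr0, qBracketPlus_inv, inv_inv,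
    ← neg_sub r r⁻¹, neg_mul, div_neg] at h
  simp only [one_mul, mul_one, div_one] at h
  rw [div_pow, sq (r - r⁻¹)]
  linear_combination h

end QBracket

section Representation
variable (q ε₂ ε₃ : ℝ) (k : ℕ)

-- The entries of `B` and `A` exactly as in the statement, indexed by `ℕ`.

noncomputable def repDiag (n : ℕ) : ℝ := ε₂ * qnumPlus q ((2 * (n : ℝ) + 1) / 2)

noncomputable def repCorner : ℝ :=
  ε₃ * qnumZ q (k : ℤ) / (q ^ ((1 : ℝ) / 2) - q ^ (-(1 : ℝ) / 2))

noncomputable def repLower (n : ℕ) : ℝ :=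
  √(qnumZ q ((k : ℤ) + (n : ℤ) + 1) * qnumZ q ((k : ℤ) - (n : ℤ) - 1)) /
    (q ^ ((2 * (n : ℝ) + 1) / 2) - q ^ (-(2 * (n : ℝ) + 1) / 2))

noncomputable def repUpper (n : ℕ) : ℝ :=
  -(√(qnumZ q ((k : ℤ) + (n : ℤ)) * qnumZ q ((k : ℤ) - (n : ℤ))) /
    (q ^ ((2 * (n : ℝ) + 1) / 2) - q ^ (-(2 * (n : ℝ) + 1) / 2)))

variable {q ε₂ ε₃ k}

theorem qnumZ_eq_qBracket (a : ℤ) : qnumZ q a = qBracket q (q ^ a) := by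
  rw [qnumZ, qBracket, _root_.zpow_neg]

theorem qnumZ_zero : qnumZ q 0 = 0 := by
  rw [qnumZ, neg_zero, sub_self, zero_div]

theorem qnumZ_nonneg (hq : 0 < q) (hq1 : q ≠ 1) {a : ℤ} (ha : 0 ≤ a) : 0 ≤ qnumZ q a := by
  unfold qnumZ
  rcases lt_or_gt_of_ne hq1 with h | h
  · apply div_nonneg_of_nonpos
    · have : q ^ a ≤ q ^ (-a) := zpow_le_zpow_right_of_le_one₀ hq h.le (by omega)
      linarith
    · have : 1 ≤ q⁻¹ := (one_le_inv₀ hq).2 h.le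
      linarith
  · apply div_nonneg
    · have : q ^ (-a) ≤ q ^ a := zpow_le_zpow_right₀ h.le (by omega)
      linarith
    · have : q⁻¹ ≤ 1 := inv_le_one_of_one_le₀ h.le
      linarith

theorem rpow_odd_div_two (hq : 0 ≤ q) (n : ℕ) : q ^ ((2 * (n : ℝ) + 1) / 2) = q ^ n * √q := by
  rw [show (2 * (n : ℝ) + 1) / 2 = n + 1 / 2 by ring, Real.rpow_add' hq (by positivity),
    Real.rpow_natCast, Real.sqrt_eq_rpow]

theorem rpow_neg_odd_div_two (hq : 0 ≤ q) (n : ℕ) :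
    q ^ (-(2 * (n : ℝ) + 1) / 2) = (q ^ n * √q)⁻¹ := by
  rw [neg_div, Real.rpow_neg hq, rpow_odd_div_two hq]

theorem repDiag_eq (hq : 0 ≤ q) (n : ℕ) : repDiag q ε₂ n = ε₂ * qBracketPlus q (q ^ n * √q) := by
  rw [repDiag, qnumPlus, qBracketPlus, Real.rpow_neg hq, rpow_odd_div_two hq]

theorem repCorner_eq (hq : 0 ≤ q) :
    repCorner q ε₃ k = ε₃ * qBracket q (q ^ k) / (√q - (√q)⁻¹) := by
  rw [repCorner, qnumZ_eq_qBracket, zpow_natCast, neg_div, Real.rpow_neg hq, Real.sqrt_eq_rpow]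

theorem qnumZ_add_mul_qnumZ_sub (hq : q ≠ 0) (m : ℕ) :
    qnumZ q ((k : ℤ) + (m : ℤ)) * qnumZ q ((k : ℤ) - (m : ℤ)) =
      qBracket q (q ^ k * q ^ m) * qBracket q (q ^ k / q ^ m) := by
  rw [qnumZ_eq_qBracket, qnumZ_eq_qBracket, zpow_add₀ hq, zpow_sub₀ hq, zpow_natCast, zpow_natCast]

theorem repLower_mul_repUpper (hq : 0 < q) (hq1 : q ≠ 1) {n : ℕ} (hn : n + 1 ≤ k) :
    repLower q k n * repUpper q k (n + 1) =
      -(qBracket q (q ^ k * q ^ (n + 1)) * qBracket q (q ^ k / q ^ (n + 1))) /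
        ((q ^ n * √q - (q ^ n * √q)⁻¹) * (q ^ (n + 1) * √q - (q ^ (n + 1) * √q)⁻¹)) := by
  have hx : 0 ≤ qnumZ q ((k : ℤ) + ((n + 1 : ℕ) : ℤ)) * qnumZ q ((k : ℤ) - ((n + 1 : ℕ) : ℤ)) :=
    mul_nonneg (qnumZ_nonneg hq hq1 (by omega)) (qnumZ_nonneg hq hq1 (by omega))
  rw [repLower, repUpper, rpow_odd_div_two hq.le, rpow_odd_div_two hq.le, rpow_neg_odd_div_two hq.le,
    rpow_neg_odd_div_two hq.le, ← qnumZ_add_mul_qnumZ_sub hq.ne' (n + 1),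
    show (k : ℤ) + (n : ℤ) + 1 = k + ((n + 1 : ℕ) : ℤ) by push_cast; ring,
    show (k : ℤ) - (n : ℤ) - 1 = k - ((n + 1 : ℕ) : ℤ) by push_cast; ring,
    mul_neg, div_mul_div_comm, Real.mul_self_sqrt hx, neg_div]

theorem repLower_pred_mul_repUpper (hk : 1 ≤ k) : repLower q k (k - 1) * repUpper q k k = 0 := by
  rw [repLower, show (k : ℤ) - ((k - 1 : ℕ) : ℤ) - 1 = 0 by omega, qnumZ_zero, mul_zero,
    Real.sqrt_zero, zero_div, zero_mul]

section Identities
variable (hq : 0 < q) (hq1 : q ≠ 1)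
include hq hq1

theorem sq_ne_one_of_pos_of_ne_one : q ^ 2 ≠ 1 := by
  rw [Ne, pow_eq_one_iff_of_nonneg hq.le two_ne_zero]
  exact hq1

theorem pow_mul_sqrt_sq_ne_one (n : ℕ) : (q ^ n * √q) ^ 2 ≠ 1 := by
  rw [mul_pow, Real.sq_sqrt hq.le, ← pow_mul, ← pow_succ, Ne,
    pow_eq_one_iff_of_nonneg hq.le (by omega)]
  exact hq1

theorem repDiag_sq_sub_mul_add_sq (hε₂ : ε₂ ^ 2 = 1) (n : ℕ) :
    repDiag q ε₂ n ^ 2 - (q + q⁻¹) * repDiag q ε₂ n * repDiag q ε₂ (n + 1) +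
      repDiag q ε₂ (n + 1) ^ 2 = -1 := by
  have h := qBracketPlus_sq_sub_mul_add_sq hq.ne' (sq_ne_one_of_pos_of_ne_one hq hq1)
    (t := q ^ n * √q) (by positivity)
  rw [repDiag_eq hq.le, repDiag_eq hq.le, show q ^ (n + 1) * √q = q ^ n * √q * q by ring]
  linear_combination ε₂ ^ 2 * h - hε₂

theorem two_sub_mul_repDiag_zero_sq (hε₂ : ε₂ ^ 2 = 1) :
    (2 - (q + q⁻¹)) * repDiag q ε₂ 0 ^ 2 = -1 := by
  rw [repDiag_eq hq.le, pow_zero, one_mul, mul_pow, hε₂, one_mul]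
  exact two_sub_mul_qBracketPlus_sq (Real.mul_self_sqrt hq.le) (Real.sqrt_pos.2 hq).ne'
    (sq_ne_one_of_pos_of_ne_one hq hq1)

theorem repCorner_sq_diag (hk : 1 ≤ k) (hε₃ : ε₃ ^ 2 = 1) :
    repCorner q ε₃ k ^ 2 * (2 * repDiag q ε₂ 0 - (q + q⁻¹) * repDiag q ε₂ 0) +
      repLower q k 0 * repUpper q k 1 * (2 * repDiag q ε₂ 0 - (q + q⁻¹) * repDiag q ε₂ 1) =
      -repDiag q ε₂ 0 := by
  rw [repCorner_eq hq.le, repLower_mul_repUpper hq hq1 hk, repDiag_eq hq.le, repDiag_eq hq.le,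
    mul_div_assoc, mul_pow, hε₃, one_mul]
  simp only [pow_zero, one_mul, zero_add, pow_one]
  linear_combination ε₂ * qBracket_identity_corner (Real.mul_self_sqrt hq.le)
    (Real.sqrt_pos.2 hq).ne' (sq_ne_one_of_pos_of_ne_one hq hq1) (pow_ne_zero k hq.ne')
    (by simpa using pow_mul_sqrt_sq_ne_one hq hq1 0) (by simpa using pow_mul_sqrt_sq_ne_one hq hq1 1)

theorem repLower_mul_repUpper_diag {n : ℕ} (hn : n + 2 ≤ k) :
    repLower q k n * repUpper q k (n + 1) *
        (2 * repDiag q ε₂ (n + 1) - (q + q⁻¹) * repDiag q ε₂ n) +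
      repLower q k (n + 1) * repUpper q k (n + 2) *
        (2 * repDiag q ε₂ (n + 1) - (q + q⁻¹) * repDiag q ε₂ (n + 2)) =
      -repDiag q ε₂ (n + 1) := by
  rw [repLower_mul_repUpper hq hq1 (by omega), repLower_mul_repUpper hq hq1 hn,
    repDiag_eq hq.le, repDiag_eq hq.le, repDiag_eq hq.le]
  simp only [pow_succ]
  linear_combination ε₂ * qBracket_identity_bulk (Real.mul_self_sqrt hq.le)
    (Real.sqrt_pos.2 hq).ne' (sq_ne_one_of_pos_of_ne_one hq hq1) (pow_ne_zero n hq.ne') (pow_ne_zero k hq.ne')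
    (pow_mul_sqrt_sq_ne_one hq hq1 n) (by simpa [pow_succ] using pow_mul_sqrt_sq_ne_one hq hq1 (n + 1))
    (by simpa [pow_succ] using pow_mul_sqrt_sq_ne_one hq hq1 (n + 2))

end Identities

theorem repDiag_add_repDiag (hq : 0 < q) (n : ℕ) :
    repDiag q ε₂ n + repDiag q ε₂ (n + 2) = (q + q⁻¹) * repDiag q ε₂ (n + 1) := by
  rw [repDiag_eq hq.le, repDiag_eq hq.le, repDiag_eq hq.le,
    show q ^ (n + 2) * √q = q ^ n * √q * q * q by ring,
    show q ^ (n + 1) * √q = q ^ n * √q * q by ring]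
  linear_combination ε₂ * qBracketPlus_add_qBracketPlus hq.ne' (t := q ^ n * √q) (by positivity)

theorem repDiag_zero_add_one (hq : 0 < q) :
    repDiag q ε₂ 0 + repDiag q ε₂ 1 = (q + q⁻¹) * repDiag q ε₂ 0 := by
  rw [repDiag_eq hq.le, repDiag_eq hq.le, pow_zero, one_mul, pow_one]
  linear_combination ε₂ * qBracketPlus_add_qBracketPlus_mul (Real.mul_self_sqrt hq.le)
    (Real.sqrt_pos.2 hq).ne'

end Representation

/-- Index `i : Fin k` stands for `m = i + 1/2`, and `l = k - 1/2`. -/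
theorem stmt_12 (q : ℝ) (hq : 0 < q) (hq1 : q ≠ 1) (k : ℕ) (hk : 1 ≤ k)
    (ε₂ ε₃ : ℝ) (hε₂ : ε₂ = 1 ∨ ε₂ = -1) (hε₃ : ε₃ = 1 ∨ ε₃ = -1)
    (A B : Matrix (Fin k) (Fin k) ℂ)
    (hB : B = Matrix.diagonal fun i : Fin k =>
      ((ε₂ * qnumPlus q ((2 * (i : ℝ) + 1) / 2) : ℝ) : ℂ))
    (hA : A = Matrix.of fun i j : Fin k =>
      if (i : ℕ) = 0 ∧ (j : ℕ) = 0 then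
        ((ε₃ * qnumZ q (k : ℤ) / (q ^ ((1 : ℝ) / 2) - q ^ (-(1 : ℝ) / 2)) : ℝ) : ℂ)
      else if (i : ℤ) = (j : ℤ) + 1 then
        ((Real.sqrt (qnumZ q ((k : ℤ) + (j : ℤ) + 1) * qnumZ q ((k : ℤ) - (j : ℤ) - 1))
          / (q ^ ((2 * (j : ℝ) + 1) / 2) - q ^ (-(2 * (j : ℝ) + 1) / 2)) : ℝ) : ℂ)
      else if (i : ℤ) = (j : ℤ) - 1 then
        -((Real.sqrt (qnumZ q ((k : ℤ) + (j : ℤ)) * qnumZ q ((k : ℤ) - (j : ℤ)))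
          / (q ^ ((2 * (j : ℝ) + 1) / 2) - q ^ (-(2 * (j : ℝ) + 1) / 2)) : ℝ) : ℂ)
      else 0) :
    A * B ^ 2 - ((q : ℂ) + (q : ℂ)⁻¹) • (B * A * B) + B ^ 2 * A = -A ∧
    A ^ 2 * B - ((q : ℂ) + (q : ℂ)⁻¹) • (A * B * A) + B * A ^ 2 = -B := by
  have hε₂sq : ε₂ ^ 2 = 1 := by rcases hε₂ with rfl | rfl <;> norm_num
  have hε₃sq : ε₃ ^ 2 = 1 := by rcases hε₃ with rfl | rfl <;> norm_num
  have hA' : A = Matrix.of fun i j : Fin k => tridiagCorner (repCorner q ε₃ k : ℂ)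
      (fun n => (repLower q k n : ℂ)) (fun n => (repUpper q k n : ℂ)) i j := by
    ext i j
    rw [hA, Matrix.of_apply, Matrix.of_apply, tridiagCorner]
    split_ifs <;> first | omega | rfl | exact (Complex.ofReal_neg _).symm
  subst hA' hB
  constructor
  · exact qSerre_tridiagCorner_diagonal _ (fun n => (repDiag q ε₂ n : ℂ))
      (by exact_mod_cast two_sub_mul_repDiag_zero_sq hq hq1 hε₂sq)
      (fun n => by exact_mod_cast repDiag_sq_sub_mul_add_sq hq hq1 hε₂sq n)
  · rw [sub_add_comm]
    exact qSerre_diagonal_tridiagCorner _ (fun n => (repDiag q ε₂ n : ℂ))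
      (by exact_mod_cast repDiag_zero_add_one hq)
      (fun n => by exact_mod_cast repDiag_add_repDiag hq n)
      (by exact_mod_cast repCorner_sq_diag hq hq1 hk hε₃sq)
      (fun n hn => by exact_mod_cast repLower_mul_repUpper_diag hq hq1 hn)
      (by exact_mod_cast repLower_pred_mul_repUpper hk)
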